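/- arXiv:1803.00542 — 3 statements merged into one kernel-verified Lean document; each statement's English description precedes it below -/
import Mathlib

section
/- Let M > 3 be a prime, χ a nontrivial Dirichlet character modulo M, and α, β, r₁, r₂, n integers with gcd(αβ, M) = 1, gcd(r₁r₂, M) = 1 and M | n. Then ℭ = χ(α β*) · R_M(r₂ − r₁ α β*) − χ(r₂ r₁*), where R_M(a) := ∑_{z=1}^{M−1} e(az/M) is the Ramanujan sum modulo M, and β*, r₁* denote inverses of β, r₁ modulo M. -/
/-! When `M ∣ n` the twist disappears: `α (n + β z⁻¹)⁻¹ = c z` with `c = α β⁻¹`, so `ℭ` is the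
complete sum `∑_z χ̄(r₁ + z) χ(r₂ + c z)` minus its `z = 0` term `χ(r₂ r₁⁻¹)`. Shifting `z` by `r₁`
and then inverting turns the complete sum into `∑_{v ≠ 0} χ(d v + c)` with `d = r₂ - r₁ c`; by
orthogonality of `χ` this is `(M - 1) χ(c)` if `d = 0` and `-χ(c)` otherwise, i.e. `χ(c) R_M(d)`,
since orthogonality of additive characters gives `R_M(d) = M [d = 0] - 1`. -/

/-- e(x) = exp(2πix). -/
noncomputable def e (x : ℝ) : ℂ := Complex.exp (2 * Real.pi * Complex.I * x)

/-- The shifted character sum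
ℭ = ∑_{z ∈ 𝔽_M^×, (n + β z̄, M) = 1} χ̄(r₁ + z) χ(r₂ + α ⋅ (n + β z̄)⁻¹). -/
noncomputable def frakC (M : ℕ) (χ : DirichletCharacter ℂ M) (α β r₁ r₂ n : ℤ) : ℂ :=
  ∑ z ∈ (Finset.Icc 1 (M - 1)).filter
      (fun z : ℕ => (n : ZMod M) + (β : ZMod M) * ((z : ZMod M))⁻¹ ≠ 0),
    (starRingEnd ℂ) (χ ((r₁ : ZMod M) + (z : ZMod M))) *
      χ ((r₂ : ZMod M) + (α : ZMod M) * ((n : ZMod M) + (β : ZMod M) * (z : ZMod M)⁻¹)⁻¹)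

/-- The Ramanujan sum R_M(a) = ∑_{z ∈ 𝔽_M^×} e(az/M). -/
noncomputable def ramanujanSum (M : ℕ) (a : ZMod M) : ℂ :=
  ∑ z ∈ Finset.Icc 1 (M - 1), e (((a * (z : ZMod M)).val : ℕ) / (M : ℝ))

open Finset

section ZModSums

variable {M : ℕ}

theorem ZMod.natCast_ne_zero_of_mem_Icc {z : ℕ} (hz : z ∈ Icc 1 (M - 1)) :
    (z : ZMod M) ≠ 0 := by
  rw [mem_Icc] at hz
  rw [← ZMod.val_ne_zero, ZMod.val_cast_of_lt (by omega)]
  omega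

variable [NeZero M]

theorem ZMod.sum_Icc_one_natCast {A : Type*} [AddCommGroup A] (f : ZMod M → A) :
    ∑ z ∈ Icc 1 (M - 1), f z = ∑ x, f x - f 0 := by
  rw [← sum_erase_eq_sub (mem_univ 0)]
  refine sum_nbij' (fun z : ℕ ↦ (z : ZMod M)) ZMod.val (fun z hz ↦ ?_) (fun x hx ↦ ?_)
    (fun z hz ↦ ?_) (fun x _ ↦ ZMod.natCast_zmod_val x) (fun _ _ ↦ rfl)
  · exact mem_erase.mpr ⟨ZMod.natCast_ne_zero_of_mem_Icc hz, mem_univ _⟩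
  · have := ZMod.val_lt x
    have := (ZMod.val_ne_zero x).mpr (ne_of_mem_erase hx)
    rw [mem_Icc]
    omega
  · rw [mem_Icc] at hz
    exact ZMod.val_cast_of_lt (by omega)

theorem e_val_div_eq_stdAddChar (j : ZMod M) : e (j.val / M) = ZMod.stdAddChar j := by
  rw [e, ZMod.stdAddChar_apply, ZMod.toCircle_apply]
  push_cast
  ring_nf

theorem ramanujanSum_eq (a : ZMod M) :
    ramanujanSum M a = (if a = 0 then (M : ℂ) else 0) - 1 := by
  simp_rw [ramanujanSum, e_val_div_eq_stdAddChar]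
  rw [ZMod.sum_Icc_one_natCast (fun z ↦ ZMod.stdAddChar (a * z))]
  simp_rw [mul_comm a]
  rw [AddChar.sum_mulShift a (ZMod.isPrimitive_stdAddChar M), ZMod.card, zero_mul,
    AddChar.map_zero_eq_one, Nat.cast_ite, Nat.cast_zero]

end ZModSums

section MulCharSums

variable {F : Type*} [Field F]

theorem MulChar.sum_apply_mul_add [Fintype F] [DecidableEq F] {χ : MulChar F ℂ} (hχ : χ ≠ 1)
    (d c : F) :
    ∑ v, χ (d * v + c) = if d = 0 then Fintype.card F * χ c else 0 := by
  split_ifs with hd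
  · simp [hd]
  · rw [← MulChar.sum_eq_zero_of_ne_one hχ]
    exact Fintype.sum_equiv ((Equiv.mulLeft₀ d hd).trans (Equiv.addRight c)) _ _ (fun _ ↦ rfl)

theorem MulChar.star_apply_eq_apply_inv [Finite F] (χ : MulChar F ℂ) (a : F) :
    star (χ a) = χ a⁻¹ := by
  rw [star_apply', inv_apply']

theorem MulChar.apply_inv_mul_apply_add_mul [DecidableEq F] (χ : MulChar F ℂ) (d c u : F) :
    χ u⁻¹ * χ (d + c * u) = χ (d * u⁻¹ + c) - if u = 0 then χ c else 0 := by
  rcases eq_or_ne u 0 with rfl | hu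
  · simp
  · rw [if_neg hu, sub_zero, ← map_mul]
    congr 1
    field_simp

theorem MulChar.sum_star_apply_add_mul_apply_add [Fintype F] [DecidableEq F] {χ : MulChar F ℂ}
    (hχ : χ ≠ 1) (r₁ r₂ c : F) :
    ∑ z, star (χ (r₁ + z)) * χ (r₂ + c * z) =
      χ c * ((if r₂ - r₁ * c = 0 then (Fintype.card F : ℂ) else 0) - 1) := by
  calc ∑ z, star (χ (r₁ + z)) * χ (r₂ + c * z)
      = ∑ u, χ u⁻¹ * χ (r₂ - r₁ * c + c * u) :=
        Fintype.sum_equiv (Equiv.addLeft r₁) _ _ fun z ↦ by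
          rw [Equiv.coe_addLeft, star_apply_eq_apply_inv]
          ring_nf
    _ = ∑ v, χ ((r₂ - r₁ * c) * v + c) - χ c := by
        simp_rw [apply_inv_mul_apply_add_mul, sum_sub_distrib, sum_ite_eq', if_pos (mem_univ _)]
        congr 1
        exact Equiv.sum_comp (Equiv.inv F) fun v ↦ χ ((r₂ - r₁ * c) * v + c)
    _ = _ := by
        rw [sum_apply_mul_add hχ]
        split_ifs <;> ring

end MulCharSums

theorem frakC_n_divisible_general (M : ℕ) (hM : M.Prime)
    (χ : DirichletCharacter ℂ M) (hχ : χ ≠ 1)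
    (α β r₁ r₂ n : ℤ) (hαβ : Int.gcd (α * β) M = 1)
    (hn : (M : ℤ) ∣ n) :
    frakC M χ α β r₁ r₂ n =
      χ ((α : ZMod M) * (β : ZMod M)⁻¹) *
          ramanujanSum M ((r₂ : ZMod M) - (r₁ : ZMod M) * (α : ZMod M) * (β : ZMod M)⁻¹) -
        χ ((r₂ : ZMod M) * (r₁ : ZMod M)⁻¹) := by
  have : Fact M.Prime := ⟨hM⟩
  have hn0 : (n : ZMod M) = 0 := (ZMod.intCast_zmod_eq_zero_iff_dvd n M).mpr hn
  have hβ : (β : ZMod M) ≠ 0 := by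
    have hαβ0 := ZMod.ne_zero_of_gcd_eq_one hM hαβ
    push_cast at hαβ0
    exact right_ne_zero_of_mul hαβ0
  set c := (α : ZMod M) * (β : ZMod M)⁻¹
  calc frakC M χ α β r₁ r₂ n
      = ∑ z ∈ Icc 1 (M - 1), star (χ (r₁ + z)) * χ (r₂ + c * z) := by
        rw [frakC, filter_true_of_mem fun z hz ↦ by
          simpa [hn0] using ⟨hβ, ZMod.natCast_ne_zero_of_mem_Icc hz⟩]
        simp_rw [hn0, zero_add, mul_inv, inv_inv, starRingEnd_apply, c, mul_assoc]
    _ = ∑ z, star (χ (r₁ + z)) * χ (r₂ + c * z) - χ ((r₂ : ZMod M) * (r₁ : ZMod M)⁻¹) := by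
        rw [ZMod.sum_Icc_one_natCast fun z : ZMod M ↦ star (χ ((r₁ : ZMod M) + z)) * χ (r₂ + c * z),
          add_zero, mul_zero, add_zero, MulChar.star_apply_eq_apply_inv, ← map_mul, mul_comm]
    _ = _ := by
        rw [MulChar.sum_star_apply_add_mul_apply_add hχ, ramanujanSum_eq, mul_assoc, ZMod.card]

/-- If M | n then ℭ = χ(αβ̄) R_M(r₂ − r₁αβ̄) − χ(r₂ r̄₁). -/
theorem frakC_n_divisible (M : ℕ) (hM : M.Prime) (hM3 : 3 < M)
    (χ : DirichletCharacter ℂ M) (hχ : χ ≠ 1)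
    (α β r₁ r₂ n : ℤ) (hαβ : Int.gcd (α * β) M = 1) (hr : Int.gcd (r₁ * r₂) M = 1)
    (hn : (M : ℤ) ∣ n) :
    frakC M χ α β r₁ r₂ n =
      χ ((α : ZMod M) * (β : ZMod M)⁻¹) *
          ramanujanSum M ((r₂ : ZMod M) - (r₁ : ZMod M) * (α : ZMod M) * (β : ZMod M)⁻¹) -
        χ ((r₂ : ZMod M) * (r₁ : ZMod M)⁻¹) :=
  frakC_n_divisible_general M hM χ hχ α β r₁ r₂ n hαβ hn
end

section
/- Let M > 3 be a prime and χ a nontrivial Dirichlet character modulo M whose square χ² is also nontrivial (i.e. χ is not a quadratic character). Let α, β, r₁, r₂, n be integers with gcd(αβ, M) = 1, gcd(r₁r₂, M) = 1, M ∤ n, and suppose r₁ ≡ n* β (mod M) and r₂ ≡ −n* α (mod M), where n* denotes an inverse of n modulo M. Then ℭ = −χ(n r₂ β*), where β* denotes an inverse of β modulo M. -/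
open Finset

section Field

variable {K : Type*} [Field K]

theorem add_mul_mul_inv_eq (n r : K) {z : K} (hz : z ≠ 0) :
    n + n * r * z⁻¹ = n * z⁻¹ * (r + z) := by
  field_simp
  ring

theorem add_mul_mul_inv_ne_zero_iff {n r z : K} (hn : n ≠ 0) (hz : z ≠ 0) :
    n + n * r * z⁻¹ ≠ 0 ↔ r + z ≠ 0 := by
  simp [add_mul_mul_inv_eq n r hz, hn, hz]

theorem add_neg_mul_inv_add_mul_mul_inv {n r₁ r₂ z : K} (hn : n ≠ 0) (hz : z ≠ 0)
    (hu : r₁ + z ≠ 0) :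
    r₂ + -(n * r₂) * (n + n * r₁ * z⁻¹)⁻¹ = r₁ * r₂ * (r₁ + z)⁻¹ := by
  rw [add_mul_mul_inv_eq n r₁ hz]
  field_simp
  ring

end Field

namespace MulChar

variable {K : Type*} [Field K]

theorem conj_apply_mul_apply_mul_inv [Finite K] (χ : MulChar K ℂ) (c u : K) :
    starRingEnd ℂ (χ u) * χ (c * u⁻¹) = χ c * (χ ^ 2)⁻¹ u := by
  rw [← RCLike.star_def, star_apply', inv_apply', inv_apply', pow_apply' χ two_ne_zero, map_mul]
  ring

theorem apply_mul_mul_inv_sq_apply (χ : MulChar K ℂ) (a b : K) :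
    χ (a * b) * (χ ^ 2)⁻¹ a = χ (b * a⁻¹) := by
  rw [inv_apply', pow_apply' χ two_ne_zero, ← map_pow, ← map_mul]
  congr 1
  rcases eq_or_ne a 0 with rfl | ha
  · simp
  · field_simp

theorem sum_erase_zero_apply_add {R R' : Type*} [CommRing R] [Fintype R] [DecidableEq R]
    [CommRing R'] [IsDomain R'] {ψ : MulChar R R'} (hψ : ψ ≠ 1) (a : R) :
    ∑ x ∈ univ.erase 0, ψ (a + x) = -ψ a := by
  rw [sum_erase_eq_sub (mem_univ 0), add_zero,
    Fintype.sum_equiv (Equiv.addLeft a) (fun x ↦ ψ (a + x)) ψ fun _ ↦ rfl,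
    sum_eq_zero_of_ne_one hψ, zero_sub]

end MulChar

namespace ZMod

theorem natCast_ne_zero_of_mem_Icc_s7 {M z : ℕ} (hz : z ∈ Icc 1 (M - 1)) : (z : ZMod M) ≠ 0 := by
  rw [mem_Icc] at hz
  rw [Ne, natCast_eq_zero_iff]
  intro hdvd
  have := Nat.le_of_dvd (by omega) hdvd
  omega

theorem sum_Icc_natCast {M : ℕ} [NeZero M] {A : Type*} [AddCommMonoid A]
    (g : ZMod M → A) : ∑ z ∈ Icc 1 (M - 1), g z = ∑ x ∈ univ.erase 0, g x := by
  have hlt : ∀ z ∈ Icc 1 (M - 1), z < M := fun z hz ↦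
    (mem_Icc.mp hz).2.trans_lt (Nat.sub_lt (NeZero.pos M) one_pos)
  refine sum_nbij' (fun z : ℕ ↦ (z : ZMod M)) val (fun z hz ↦ ?_) (fun x hx ↦ ?_)
    (fun z hz ↦ val_natCast_of_lt (hlt z hz)) (fun x _ ↦ natCast_zmod_val x) (fun _ _ ↦ rfl)
  · simpa using natCast_ne_zero_of_mem_Icc_s7 hz
  · have := x.val_lt
    rw [mem_erase, Ne, ← val_eq_zero] at hx
    rw [mem_Icc]
    omega

end ZMod

theorem frakC_degenerate_not_quadratic_general (M : ℕ) (hM : M.Prime)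
    (χ : DirichletCharacter ℂ M) (hχ2 : χ ^ 2 ≠ 1)
    (α β r₁ r₂ n : ℤ)
    (hn : ¬ (M : ℤ) ∣ n)
    (h1 : (r₁ : ZMod M) = (n : ZMod M)⁻¹ * (β : ZMod M))
    (h2 : (r₂ : ZMod M) = -((n : ZMod M)⁻¹ * (α : ZMod M))) :
    frakC M χ α β r₁ r₂ n = -χ ((n : ZMod M) * (r₂ : ZMod M) * (β : ZMod M)⁻¹) := by
  have : Fact M.Prime := ⟨hM⟩
  have hn0 : (n : ZMod M) ≠ 0 := by rwa [Ne, ZMod.intCast_zmod_eq_zero_iff_dvd]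
  have hβ : (β : ZMod M) = n * r₁ := by rw [h1, mul_inv_cancel_left₀ hn0]
  have hα : (α : ZMod M) = -(n * r₂) := by rw [h2, mul_neg, neg_neg, mul_inv_cancel_left₀ hn0]
  calc frakC M χ α β r₁ r₂ n
      = ∑ z ∈ (Icc 1 (M - 1)).filter fun z : ℕ ↦ (n : ZMod M) + n * r₁ * (z : ZMod M)⁻¹ ≠ 0,
          χ ((r₁ : ZMod M) * r₂) * (χ ^ 2)⁻¹ ((r₁ : ZMod M) + z) := by
        rw [frakC, hα, hβ]
        refine sum_congr rfl fun z hz ↦ ?_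
        obtain ⟨hz, hne⟩ := mem_filter.mp hz
        rw [add_mul_mul_inv_ne_zero_iff hn0 (ZMod.natCast_ne_zero_of_mem_Icc_s7 hz)] at hne
        rw [add_neg_mul_inv_add_mul_mul_inv hn0 (ZMod.natCast_ne_zero_of_mem_Icc_s7 hz) hne,
          MulChar.conj_apply_mul_apply_mul_inv]
    _ = χ ((r₁ : ZMod M) * r₂) * ∑ x ∈ univ.erase 0, (χ ^ 2)⁻¹ ((r₁ : ZMod M) + x) := by
        rw [← mul_sum, sum_filter_of_ne fun z hz hψz ↦ ?_,
          ZMod.sum_Icc_natCast fun x ↦ (χ ^ 2)⁻¹ ((r₁ : ZMod M) + x)]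
        rw [add_mul_mul_inv_ne_zero_iff hn0 (ZMod.natCast_ne_zero_of_mem_Icc_s7 hz)]
        intro h
        rw [h, MulChar.map_zero] at hψz
        exact hψz rfl
    _ = -χ ((n : ZMod M) * (r₂ : ZMod M) * (β : ZMod M)⁻¹) := by
        rw [MulChar.sum_erase_zero_apply_add (inv_ne_one.mpr hχ2), mul_neg,
          MulChar.apply_mul_mul_inv_sq_apply, hβ, mul_inv, mul_comm (n : ZMod M) r₂, mul_assoc,
          mul_inv_cancel_left₀ hn0]

/-- If M ∤ n, r₁ ≡ n̄β and r₂ ≡ −n̄α (mod M), and χ is not quadratic,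
then ℭ = −χ(n r₂ β̄). -/
theorem frakC_degenerate_not_quadratic (M : ℕ) (hM : M.Prime) (hM3 : 3 < M)
    (χ : DirichletCharacter ℂ M) (hχ : χ ≠ 1) (hχ2 : χ ^ 2 ≠ 1)
    (α β r₁ r₂ n : ℤ) (hαβ : Int.gcd (α * β) M = 1) (hr : Int.gcd (r₁ * r₂) M = 1)
    (hn : ¬ (M : ℤ) ∣ n)
    (h1 : (r₁ : ZMod M) = (n : ZMod M)⁻¹ * (β : ZMod M))
    (h2 : (r₂ : ZMod M) = -((n : ZMod M)⁻¹ * (α : ZMod M))) :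
    frakC M χ α β r₁ r₂ n = -χ ((n : ZMod M) * (r₂ : ZMod M) * (β : ZMod M)⁻¹) :=
  frakC_degenerate_not_quadratic_general M hM χ hχ2 α β r₁ r₂ n hn h1 h2
end

section
/- Let M > 3 be a prime, χ a nontrivial Dirichlet character modulo M, and α, β, r₁, r₂, n integers with gcd(αβ, M) = 1, gcd(r₁r₂, M) = 1, M ∤ n, and n ≡ β r₁* − α r₂* (mod M), where r₁*, r₂* denote inverses of r₁, r₂ modulo M. Then ℭ = −χ²(r₂ r₁*) χ(β α*) − χ(r₂ r₁*), where α* denotes an inverse of α modulo M. -/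
theorem ZMod.intCast_ne_zero_of_gcd_eq_one {M : ℕ} (hM : M ≠ 1) {a : ℤ}
    (h : Int.gcd a M = 1) : (a : ZMod M) ≠ 0 := by
  rw [Ne, ZMod.intCast_zmod_eq_zero_iff_dvd]
  intro hdvd
  have := Int.gcd_eq_right (Int.natCast_nonneg M) hdvd
  rw [h] at this
  exact hM (by exact_mod_cast this.symm)

theorem ZMod.sum_Icc_natCast_s9 {M : ℕ} [NeZero M] {β : Type*} [AddCommMonoid β]
    (f : ZMod M → β) :
    ∑ z ∈ Finset.Icc 1 (M - 1), f z = ∑ x ∈ Finset.univ.erase 0, f x := by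
  refine Finset.sum_nbij' Nat.cast ZMod.val ?_ ?_ ?_ ?_ fun _ _ => rfl
  · intro z hz
    simp only [Finset.mem_Icc, Finset.mem_erase, Finset.mem_univ, and_true] at hz ⊢
    rw [Ne, ZMod.natCast_eq_zero_iff]
    exact fun h => absurd (Nat.le_of_dvd (by omega) h) (by omega)
  · intro x hx
    simp only [Finset.mem_Icc, Finset.mem_erase, Finset.mem_univ, and_true] at hx ⊢
    have := ZMod.val_lt x
    have := (ZMod.val_ne_zero x).2 hx
    omega
  · intro z hz
    simp only [Finset.mem_Icc] at hz
    exact ZMod.val_cast_of_lt (by omega)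
  · intro x _
    exact ZMod.natCast_zmod_val x

theorem MulChar.starRingEnd_mul_self {R : Type*} [CommRing R] [Finite Rˣ]
    (χ : MulChar R ℂ) {x : R} (hx : IsUnit x) : starRingEnd ℂ (χ x) * χ x = 1 := by
  rw [← Complex.star_def, star_apply', ← mul_apply, inv_mul, one_apply hx]

theorem MulChar.sum_mul_inv_affine_eq_zero {F R : Type*} [Field F] [Fintype F] [CommRing R]
    [IsDomain R] {χ : MulChar F R} (hχ : χ ≠ 1) {a c : F} (ha : a ≠ 0) (hc : c ≠ 0) (b : F) :
    ∑ x, χ (c * (a * x + b)⁻¹) = 0 := by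
  have hbij : Function.Bijective fun x : F => c * (a * x + b)⁻¹ :=
    (mulLeft_bijective₀ c hc).comp <| (Equiv.inv F).bijective.comp <|
      (Equiv.addRight b).bijective.comp (mulLeft_bijective₀ a ha)
  rw [hbij.sum_comp χ]
  exact sum_eq_zero_of_ne_one hχ

section ShiftedSum

variable {F : Type*} [Field F] {A B R₁ R₂ N : F}

theorem add_mul_inv_add_mul_inv_inv (hR₁ : R₁ ≠ 0) (hR₂ : R₂ ≠ 0)
    (hN : N = B * R₁⁻¹ - A * R₂⁻¹) {z : F} (hz : z ≠ 0) (hzN : N * z + B ≠ 0) :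
    R₂ + A * (N + B * z⁻¹)⁻¹ = B * R₂ * R₁⁻¹ * (N * z + B)⁻¹ * (R₁ + z) := by
  have hinv : (N + B * z⁻¹)⁻¹ = z * (N * z + B)⁻¹ := by
    rw [show N + B * z⁻¹ = (N * z + B) * z⁻¹ by field_simp, mul_inv, inv_inv, mul_comm]
  have key : R₂ * (N * z + B) + A * z = B * R₂ * R₁⁻¹ * (R₁ + z) := by
    rw [hN]
    field_simp
    ring
  rw [hinv]
  linear_combination (N * z + B)⁻¹ * key - R₂ * mul_inv_cancel₀ hzN

variable [DecidableEq F]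

theorem ite_starRingEnd_mulChar_mul_mulChar_eq [Finite F] (χ : MulChar F ℂ)
    (hA : A ≠ 0) (hR₁ : R₁ ≠ 0) (hR₂ : R₂ ≠ 0)
    (hN : N = B * R₁⁻¹ - A * R₂⁻¹) {z : F} (hz : z ≠ 0) :
    (if N + B * z⁻¹ ≠ 0 then starRingEnd ℂ (χ (R₁ + z)) * χ (R₂ + A * (N + B * z⁻¹)⁻¹) else 0) =
      χ (B * R₂ * R₁⁻¹ * (N * z + B)⁻¹) -
        if z = -R₁ then χ (B * R₂ * R₁⁻¹ * (N * z + B)⁻¹) else 0 := by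
  have hE : N * -R₁ + B = A * R₁ * R₂⁻¹ := by
    rw [hN]
    field_simp
    ring
  have hzN : N + B * z⁻¹ ≠ 0 ↔ N * z + B ≠ 0 := by
    rw [show N + B * z⁻¹ = (N * z + B) * z⁻¹ by field_simp]
    simp [hz]
  rw [if_congr hzN rfl rfl]
  by_cases hzB : N * z + B = 0
  · have hzR₁ : z ≠ -R₁ := by
      rintro rfl
      exact (by simp [hA, hR₁, hR₂] : A * R₁ * R₂⁻¹ ≠ 0) (hE ▸ hzB)
    simp [hzB, hzR₁, MulChar.map_zero]
  by_cases hzR₁ : R₁ + z = 0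
  · rw [if_pos hzB, if_pos (eq_neg_of_add_eq_zero_right hzR₁), hzR₁, MulChar.map_zero, map_zero,
      zero_mul, sub_self]
  · rw [if_pos hzB, if_neg fun h => hzR₁ (by rw [h, add_neg_cancel]),
      add_mul_inv_add_mul_inv_inv hR₁ hR₂ hN hz hzB, map_mul, mul_left_comm,
      MulChar.starRingEnd_mul_self _ (Ne.isUnit hzR₁), mul_one, sub_zero]

theorem sum_starRingEnd_mulChar_mul_mulChar_eq [Fintype F] {χ : MulChar F ℂ} (hχ : χ ≠ 1)
    (hA : A ≠ 0) (hB : B ≠ 0) (hR₁ : R₁ ≠ 0) (hR₂ : R₂ ≠ 0) (hN₀ : N ≠ 0)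
    (hN : N = B * R₁⁻¹ - A * R₂⁻¹) :
    ∑ z ∈ (Finset.univ.erase 0).filter (fun z => N + B * z⁻¹ ≠ 0),
        starRingEnd ℂ (χ (R₁ + z)) * χ (R₂ + A * (N + B * z⁻¹)⁻¹) =
      -χ (R₂ * R₁⁻¹) ^ 2 * χ (B * A⁻¹) - χ (R₂ * R₁⁻¹) := by
  have hC : B * R₂ * R₁⁻¹ ≠ 0 := by simp [hB, hR₁, hR₂]
  have h₀ : B * R₂ * R₁⁻¹ * (N * 0 + B)⁻¹ = R₂ * R₁⁻¹ := by
    rw [mul_zero, zero_add]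
    field_simp
  have h₁ : B * R₂ * R₁⁻¹ * (N * -R₁ + B)⁻¹ = (R₂ * R₁⁻¹) ^ 2 * (B * A⁻¹) := by
    rw [hN]
    field_simp
    ring
  rw [Finset.sum_filter, Finset.sum_congr rfl fun z hz =>
      ite_starRingEnd_mulChar_mul_mulChar_eq χ hA hR₁ hR₂ hN (Finset.ne_of_mem_erase hz),
    Finset.sum_sub_distrib, Finset.sum_ite_eq', if_pos (by simpa using hR₁),
    Finset.sum_erase_eq_sub (Finset.mem_univ 0), MulChar.sum_mul_inv_affine_eq_zero hχ hN₀ hC B,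
    h₀, h₁, map_mul χ (_ ^ 2), map_pow]
  ring

end ShiftedSum

theorem frakC_special_n_general (M : ℕ) (hM : M.Prime)
    (χ : DirichletCharacter ℂ M) (hχ : χ ≠ 1)
    (α β r₁ r₂ n : ℤ) (hαβ : Int.gcd (α * β) M = 1) (hr : Int.gcd (r₁ * r₂) M = 1)
    (hn : ¬ (M : ℤ) ∣ n)
    (hcong : (n : ZMod M) = (β : ZMod M) * (r₁ : ZMod M)⁻¹ - (α : ZMod M) * (r₂ : ZMod M)⁻¹) :
    frakC M χ α β r₁ r₂ n =
      -(χ ((r₂ : ZMod M) * (r₁ : ZMod M)⁻¹)) ^ 2 * χ ((β : ZMod M) * (α : ZMod M)⁻¹) -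
        χ ((r₂ : ZMod M) * (r₁ : ZMod M)⁻¹) := by
  have : Fact M.Prime := ⟨hM⟩
  have hαβ' := ZMod.intCast_ne_zero_of_gcd_eq_one hM.ne_one hαβ
  have hr' := ZMod.intCast_ne_zero_of_gcd_eq_one hM.ne_one hr
  have hn' : (n : ZMod M) ≠ 0 := mt (ZMod.intCast_zmod_eq_zero_iff_dvd n M).1 hn
  push_cast at hαβ' hr'
  rw [← sum_starRingEnd_mulChar_mul_mulChar_eq hχ (left_ne_zero_of_mul hαβ')
    (right_ne_zero_of_mul hαβ') (left_ne_zero_of_mul hr') (right_ne_zero_of_mul hr') hn' hcong,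
    Finset.sum_filter, ← ZMod.sum_Icc_natCast_s9, frakC, Finset.sum_filter]

/-- If M ∤ n and n ≡ β r̄₁ − α r̄₂ (mod M), then
ℭ = −χ²(r₂ r̄₁) χ(β ᾱ) − χ(r₂ r̄₁). -/
theorem frakC_special_n (M : ℕ) (hM : M.Prime) (hM3 : 3 < M)
    (χ : DirichletCharacter ℂ M) (hχ : χ ≠ 1)
    (α β r₁ r₂ n : ℤ) (hαβ : Int.gcd (α * β) M = 1) (hr : Int.gcd (r₁ * r₂) M = 1)
    (hn : ¬ (M : ℤ) ∣ n)
    (hcong : (n : ZMod M) = (β : ZMod M) * (r₁ : ZMod M)⁻¹ - (α : ZMod M) * (r₂ : ZMod M)⁻¹) :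
    frakC M χ α β r₁ r₂ n =
      -(χ ((r₂ : ZMod M) * (r₁ : ZMod M)⁻¹)) ^ 2 * χ ((β : ZMod M) * (α : ZMod M)⁻¹) -
        χ ((r₂ : ZMod M) * (r₁ : ZMod M)⁻¹) :=
  frakC_special_n_general M hM χ hχ α β r₁ r₂ n hαβ hr hn hcong
end
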